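/- arXiv:2503.02566 — 2 statements merged into one kernel-verified Lean document; each statement's English description precedes it below -/
import Mathlib

section
/- Let n ∈ ℕ, F ⊆ Fin n, and f : Fin n → Fin n be a given n-Queens completion instance, and let I be the SA 2 instance constructed from it. Then an allocation a : Fin n → Fin n × Fin n is SA 2-feasible for I if and only if the second coordinate of a(j) equals j for every j ∈ Fin n and the map q : Fin n → Fin n defined by q(j) = first coordinate of a(j) is a solution of the n-Queens completion instance. -/
/-!
STATEMENT 12: For the SA 2 instance constructed from an n-Queens completion instance
`(n, F, f)`, an allocation `a : Fin n → Fin n × Fin n` is SA 2-feasible iff the second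
coordinate of `a j` is `j` for every row `j` and the map `j ↦ (a j).1` is a solution of
the n-Queens completion instance.
-/

/-- An allocation `a` is SA 2-feasible if every branch is connected to its hub by an
existing edge and every task's hub-to-hub connection is an existing edge. -/
def SA2Feasible {B H : Type*} (EBH : Set (B × H)) (EHH : Set (H × H))
    (τ : Set (B × B)) (a : B → H) : Prop :=
  (∀ b, (b, a b) ∈ EBH) ∧ ∀ t ∈ τ, (a t.1, a t.2) ∈ EHH

/-- Branch–hub edges of the constructed SA 2 instance: row `j` may use hub `(i, j')`
only if `j' = j`, and if the queen of row `j` is pre-placed then `i = f j`. -/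
def queensEBH (n : ℕ) (F : Finset (Fin n)) (f : Fin n → Fin n) :
    Set (Fin n × (Fin n × Fin n)) :=
  {p | p.2.2 = p.1 ∧ (p.1 ∈ F → p.2.1 = f p.1)}

/-- Hub–hub edges of the constructed SA 2 instance: two squares are connected iff the
corresponding queens do not attack each other. -/
def queensEHH (n : ℕ) : Set ((Fin n × Fin n) × (Fin n × Fin n)) :=
  {p | p.1.1 ≠ p.2.1 ∧ p.1.2 ≠ p.2.2 ∧
    |(p.1.1 : ℤ) - (p.2.1 : ℤ)| ≠ |(p.1.2 : ℤ) - (p.2.2 : ℤ)|}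

/-- Tasks of the constructed SA 2 instance: one task for every ordered pair of distinct
rows. -/
def queensTasks (n : ℕ) : Set (Fin n × Fin n) := {p | p.1 ≠ p.2}

/-- `q` is a solution of the n-Queens completion instance `(n, F, f)`. -/
def QueensSolution (n : ℕ) (F : Finset (Fin n)) (f : Fin n → Fin n)
    (q : Fin n → Fin n) : Prop :=
  (∀ j ∈ F, q j = f j) ∧ Function.Injective q ∧
    ∀ i j : Fin n, i ≠ j → |(i : ℤ) - (j : ℤ)| ≠ |(q i : ℤ) - (q j : ℤ)|

theorem stmt12 (n : ℕ) (F : Finset (Fin n)) (f : Fin n → Fin n)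
    (a : Fin n → Fin n × Fin n) :
    SA2Feasible (queensEBH n F f) (queensEHH n) (queensTasks n) a ↔
      ((∀ j : Fin n, (a j).2 = j) ∧
        QueensSolution n F f (fun j => (a j).1)) := by
  constructor
  · rintro ⟨hBH, hHH⟩
    have hsnd : ∀ j : Fin n, (a j).2 = j := fun j => (hBH j).1
    refine ⟨hsnd, ?_, ?_, ?_⟩
    · intro j hj; exact (hBH j).2 hj
    · intro i j hq
      by_contra hne
      exact (hHH (i, j) hne).1 hq
    · intro i j hij
      have h := hHH (i, j) hij
      simpa [queensEHH, hsnd, abs_sub_comm] using h.2.2.symm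
  · rintro ⟨hsnd, hF, hinj, hdiag⟩
    constructor
    · intro b; exact ⟨hsnd b, fun hb => hF b hb⟩
    · rintro ⟨i, j⟩ (hij : i ≠ j)
      refine ⟨fun h => hij (hinj h), ?_, ?_⟩
      · rw [hsnd, hsnd]; exact fun h => hij h
      · rw [hsnd, hsnd]
        exact fun h => hdiag i j hij h.symm
end

section
/- Let n ∈ ℕ, F ⊆ Fin n, and f : Fin n → Fin n be a given n-Queens completion instance, and let I be the SA 2 instance constructed from it. Then there exists an SA 2-feasible allocation a : Fin n → Fin n × Fin n for I if and only if the n-Queens completion instance has a solution. -/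
theorem stmt13 (n : ℕ) (F : Finset (Fin n)) (f : Fin n → Fin n) :
    (∃ a : Fin n → Fin n × Fin n,
      SA2Feasible (queensEBH n F f) (queensEHH n) (queensTasks n) a) ↔
      (∃ q : Fin n → Fin n, QueensSolution n F f q) := by
  constructor
  · rintro ⟨a, hb, ht⟩
    refine ⟨fun j => (a j).1, fun j hj => (hb j).2 hj, ?_, ?_⟩
    · intro i j hij
      by_contra hne
      exact ((ht (i, j) hne).1) hij
    · intro i j hij
      have h := ht (i, j) hij
      have h1 := (hb i).1
      have h2 := (hb j).1
      have h3 := h.2.2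
      simp only at h1 h2
      rw [h1, h2] at h3
      simp only
      exact fun he => h3 he.symm
  · rintro ⟨q, hF, hinj, hdiag⟩
    refine ⟨fun j => (q j, j), fun b => ⟨rfl, fun hb => hF b hb⟩, ?_⟩
    rintro ⟨i, j⟩ hij
    exact ⟨fun he => hij (hinj he), hij, fun he => hdiag i j hij he.symm⟩
end
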